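/- arXiv:1809.07167 — 2 statements merged into one kernel-verified Lean document; each statement's English description precedes it below -/
import Mathlib

section
/- If w ∈ ℤ[ζ₈] is odd (coprime to 2), then N(w) ≡ 1 (mod 8), where N is the norm from ℚ(ζ₈) to ℚ. -/
open NumberField

instance : NumberField (CyclotomicField 8 ℚ) :=
  @IsCyclotomicExtension.numberField {8} ℚ (CyclotomicField 8 ℚ) _ _ _ _ _
    (CyclotomicField.isCyclotomicExtension 8 ℚ)

section Aux

lemma aux_det_fin_four {R : Type*} [CommRing R] (A : Matrix (Fin 4) (Fin 4) R) :
    A.det =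
      A 0 0*A 1 1*A 2 2*A 3 3 - A 0 0*A 1 1*A 2 3*A 3 2
      - A 0 0*A 1 2*A 2 1*A 3 3 + A 0 0*A 1 2*A 2 3*A 3 1
      + A 0 0*A 1 3*A 2 1*A 3 2 - A 0 0*A 1 3*A 2 2*A 3 1
      - A 0 1*A 1 0*A 2 2*A 3 3 + A 0 1*A 1 0*A 2 3*A 3 2
      + A 0 1*A 1 2*A 2 0*A 3 3 - A 0 1*A 1 2*A 2 3*A 3 0
      - A 0 1*A 1 3*A 2 0*A 3 2 + A 0 1*A 1 3*A 2 2*A 3 0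
      + A 0 2*A 1 0*A 2 1*A 3 3 - A 0 2*A 1 0*A 2 3*A 3 1
      - A 0 2*A 1 1*A 2 0*A 3 3 + A 0 2*A 1 1*A 2 3*A 3 0
      + A 0 2*A 1 3*A 2 0*A 3 1 - A 0 2*A 1 3*A 2 1*A 3 0
      - A 0 3*A 1 0*A 2 1*A 3 2 + A 0 3*A 1 0*A 2 2*A 3 1
      + A 0 3*A 1 1*A 2 0*A 3 2 - A 0 3*A 1 1*A 2 2*A 3 0
      - A 0 3*A 1 2*A 2 0*A 3 1 + A 0 3*A 1 2*A 2 1*A 3 0 := by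
  simp [Matrix.det_succ_row_zero, Fin.sum_univ_succ,
    show (Fin.succ 2 : Fin 4) = 3 from rfl,
    show Fin.succAbove (2 : Fin 4) 2 = 3 from rfl,
    show Fin.succAbove (1 : Fin 4) 2 = 3 from rfl,
    show Fin.castSucc (2 : Fin 3) = (2 : Fin 4) from rfl,
    show Fin.succAbove (3 : Fin 4) 2 = 2 from rfl]
  ring

/-- Every element of a ring with power basis `1, η, η², η³` is an integer combination. -/
lemma aux_repr {S : Type*} [CommRing S] [Algebra ℤ S] (η : S) (pb : PowerBasis ℤ S)
    (hdim : pb.dim = 4) (hgen : pb.gen = η) (x : S) :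
    ∃ a₀ a₁ a₂ a₃ : ℤ, x = (a₀ : S) + a₁ * η + a₂ * η ^ 2 + a₃ * η ^ 3 := by
  letI : SMul ℤ S := Algebra.toSMul
  letI : Module ℤ S := Algebra.toModule
  obtain ⟨gen, dim, b, hbpow⟩ := pb
  try simp only at hdim hgen
  subst hdim
  have hb0 : b 0 = 1 := by
    rw [hbpow 0, hgen, show ((0 : Fin 4) : ℕ) = 0 from rfl, pow_zero]
  have hb1 : b 1 = η := by
    rw [hbpow 1, hgen, show ((1 : Fin 4) : ℕ) = 1 from rfl, pow_one]
  have hb2 : b 2 = η ^ 2 := by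
    rw [hbpow 2, hgen, show ((2 : Fin 4) : ℕ) = 2 from rfl]
  have hb3 : b 3 = η ^ 3 := by
    rw [hbpow 3, hgen, show ((3 : Fin 4) : ℕ) = 3 from rfl]
  refine ⟨b.repr x 0, b.repr x 1, b.repr x 2, b.repr x 3, ?_⟩
  conv_lhs => rw [← b.sum_repr x]
  rw [Fin.sum_univ_four, hb0, hb1, hb2, hb3]
  simp only [Algebra.smul_def, algebraMap_int_eq, eq_intCast]
  ring

/-- The norm form of `ℤ[η]` with `η⁴ = -1`. -/
lemma aux_norm {S : Type*} [CommRing S] [Algebra ℤ S] (η : S) (pb : PowerBasis ℤ S)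
    (hdim : pb.dim = 4) (hgen : pb.gen = η) (hη : η ^ 4 = -1) (a₀ a₁ a₂ a₃ : ℤ) :
    Algebra.norm ℤ ((a₀ : S) + a₁ * η + a₂ * η ^ 2 + a₃ * η ^ 3) =
      a₀ ^ 4 + a₁ ^ 4 + a₂ ^ 4 + a₃ ^ 4 + 2 * a₀ ^ 2 * a₂ ^ 2 + 2 * a₁ ^ 2 * a₃ ^ 2
        + 4 * a₀ ^ 2 * a₁ * a₃ - 4 * a₀ * a₁ ^ 2 * a₂ + 4 * a₀ * a₂ * a₃ ^ 2
        - 4 * a₁ * a₂ ^ 2 * a₃ := by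
  letI : SMul ℤ S := Algebra.toSMul
  letI : Module ℤ S := Algebra.toModule
  obtain ⟨gen, dim, b, hbpow⟩ := pb
  try simp only at hdim hgen
  subst hdim
  have hb0 : b 0 = 1 := by
    rw [hbpow 0, hgen, show ((0 : Fin 4) : ℕ) = 0 from rfl, pow_zero]
  have hb1 : b 1 = η := by
    rw [hbpow 1, hgen, show ((1 : Fin 4) : ℕ) = 1 from rfl, pow_one]
  have hb2 : b 2 = η ^ 2 := by
    rw [hbpow 2, hgen, show ((2 : Fin 4) : ℕ) = 2 from rfl]
  have hb3 : b 3 = η ^ 3 := by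
    rw [hbpow 3, hgen, show ((3 : Fin 4) : ℕ) = 3 from rfl]
  set w : S := (a₀ : S) + a₁ * η + a₂ * η ^ 2 + a₃ * η ^ 3 with hw
  have h0 : ⇑(b.repr (w * b 0)) = ![a₀, a₁, a₂, a₃] := by
    have h : w * b 0 = ∑ i : Fin 4, (![a₀, a₁, a₂, a₃]) i • b i := by
      rw [Fin.sum_univ_four, hb0, hb1, hb2, hb3]
      simp only [Matrix.cons_val_zero, Matrix.cons_val_one, Matrix.head_cons,
        Matrix.cons_val_two, Matrix.tail_cons, Matrix.cons_val_three, Algebra.smul_def, algebraMap_int_eq, eq_intCast]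
      ring
    rw [h]; exact b.repr_sum_self _
  have h1 : ⇑(b.repr (w * b 1)) = ![-a₃, a₀, a₁, a₂] := by
    have h : w * b 1 = ∑ i : Fin 4, (![-a₃, a₀, a₁, a₂]) i • b i := by
      rw [Fin.sum_univ_four, hb0, hb1, hb2, hb3]
      simp only [Matrix.cons_val_zero, Matrix.cons_val_one, Matrix.head_cons,
        Matrix.cons_val_two, Matrix.tail_cons, Matrix.cons_val_three, Algebra.smul_def, algebraMap_int_eq, eq_intCast]
      push_cast
      linear_combination (a₃ : S) * hη
    rw [h]; exact b.repr_sum_self _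
  have h2 : ⇑(b.repr (w * b 2)) = ![-a₂, -a₃, a₀, a₁] := by
    have h : w * b 2 = ∑ i : Fin 4, (![-a₂, -a₃, a₀, a₁]) i • b i := by
      rw [Fin.sum_univ_four, hb0, hb1, hb2, hb3]
      simp only [Matrix.cons_val_zero, Matrix.cons_val_one, Matrix.head_cons,
        Matrix.cons_val_two, Matrix.tail_cons, Matrix.cons_val_three, Algebra.smul_def, algebraMap_int_eq, eq_intCast]
      push_cast
      linear_combination ((a₂ : S) + a₃ * η) * hη
    rw [h]; exact b.repr_sum_self _
  have h3 : ⇑(b.repr (w * b 3)) = ![-a₁, -a₂, -a₃, a₀] := by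
    have h : w * b 3 = ∑ i : Fin 4, (![-a₁, -a₂, -a₃, a₀]) i • b i := by
      rw [Fin.sum_univ_four, hb0, hb1, hb2, hb3]
      simp only [Matrix.cons_val_zero, Matrix.cons_val_one, Matrix.head_cons,
        Matrix.cons_val_two, Matrix.tail_cons, Matrix.cons_val_three, Algebra.smul_def, algebraMap_int_eq, eq_intCast]
      push_cast
      linear_combination ((a₁ : S) + a₂ * η + a₃ * η ^ 2) * hη
    rw [h]; exact b.repr_sum_self _
  rw [Algebra.norm_eq_matrix_det b w, aux_det_fin_four]
  simp only [Algebra.leftMulMatrix_eq_repr_mul, h0, h1, h2, h3, Matrix.cons_val_zero,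
    Matrix.cons_val_one, Matrix.head_cons, Matrix.cons_val_two, Matrix.tail_cons,
    Matrix.cons_val_three]
  ring

lemma aux_decide : ∀ x y z t : ZMod 8,
    (ZMod.castHom (by norm_num : (2 : ℕ) ∣ 8) (ZMod 2))
        (x ^ 4 + y ^ 4 + z ^ 4 + t ^ 4 + 2 * x ^ 2 * z ^ 2 + 2 * y ^ 2 * t ^ 2
          + 4 * x ^ 2 * y * t - 4 * x * y ^ 2 * z + 4 * x * z * t ^ 2
          - 4 * y * z ^ 2 * t) = 1 →
      x ^ 4 + y ^ 4 + z ^ 4 + t ^ 4 + 2 * x ^ 2 * z ^ 2 + 2 * y ^ 2 * t ^ 2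
          + 4 * x ^ 2 * y * t - 4 * x * y ^ 2 * z + 4 * x * z * t ^ 2
          - 4 * y * z ^ 2 * t = 1 := by
  decide

lemma aux_odd : ∀ x y z t : ZMod 2,
    (1 - 2 * x) ^ 4 + (-(2 * y)) ^ 4 + (-(2 * z)) ^ 4 + (-(2 * t)) ^ 4
        + 2 * (1 - 2 * x) ^ 2 * (-(2 * z)) ^ 2 + 2 * (-(2 * y)) ^ 2 * (-(2 * t)) ^ 2
        + 4 * (1 - 2 * x) ^ 2 * (-(2 * y)) * (-(2 * t))
        - 4 * (1 - 2 * x) * (-(2 * y)) ^ 2 * (-(2 * z))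
        + 4 * (1 - 2 * x) * (-(2 * z)) * (-(2 * t)) ^ 2
        - 4 * (-(2 * y)) * (-(2 * z)) ^ 2 * (-(2 * t)) = 1 := by
  decide

end Aux

/-- If `w ∈ ℤ[ζ₈]` is odd (coprime to 2), then `N(w) ≡ 1 (mod 8)`. -/
theorem stmt_3 (w : 𝓞 (CyclotomicField 8 ℚ)) (hodd : IsCoprime w 2) :
    Algebra.norm ℤ w ≡ 1 [ZMOD 8] := by
  have h8 : ((2 : ℕ) ^ 3) = 8 := rfl
  haveI hcyc : IsCyclotomicExtension {(2 : ℕ) ^ 3} ℚ (CyclotomicField 8 ℚ) := by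
    rw [h8]; exact CyclotomicField.isCyclotomicExtension 8 ℚ
  have hζ := IsCyclotomicExtension.zeta_spec ((2 : ℕ) ^ 3) ℚ (CyclotomicField 8 ℚ)
  set η : 𝓞 (CyclotomicField 8 ℚ) := hζ.toInteger with hηdef
  -- the power basis
  have hdim : hζ.integralPowerBasis.dim = 4 := by
    rw [hζ.integralPowerBasis_dim]; rfl
  have hgen : hζ.integralPowerBasis.gen = η := hζ.integralPowerBasis_gen
  -- η ^ 4 = -1
  have hprim : IsPrimitiveRoot η ((2 : ℕ+) ^ 3 : ℕ+) := hζ.toInteger_isPrimitiveRoot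
  have hpow8 : η ^ 8 = 1 := by
    have := hprim.pow_eq_one
    rwa [show (((2 : ℕ+) ^ 3 : ℕ+) : ℕ) = 8 from rfl] at this
  have hne : η ^ 4 ≠ 1 := by
    have := hprim.pow_ne_one_of_pos_of_lt (l := 4) (by norm_num) (by norm_num)
    simpa using this
  have hη : η ^ 4 = -1 := by
    have hz : (η ^ 4 - 1) * (η ^ 4 + 1) = 0 := by
      have : (η ^ 4) ^ 2 = 1 := by rw [← pow_mul]; exact hpow8
      linear_combination this
    rcases mul_eq_zero.mp hz with h | h
    · exact absurd (by linear_combination h) hne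
    · linear_combination h
  -- coordinates of w
  obtain ⟨a₀, a₁, a₂, a₃, hw⟩ := aux_repr η hζ.integralPowerBasis hdim hgen w
  have hNw : Algebra.norm ℤ w =
      a₀ ^ 4 + a₁ ^ 4 + a₂ ^ 4 + a₃ ^ 4 + 2 * a₀ ^ 2 * a₂ ^ 2 + 2 * a₁ ^ 2 * a₃ ^ 2
        + 4 * a₀ ^ 2 * a₁ * a₃ - 4 * a₀ * a₁ ^ 2 * a₂ + 4 * a₀ * a₂ * a₃ ^ 2
        - 4 * a₁ * a₂ ^ 2 * a₃ := by
    rw [hw]; exact aux_norm η hζ.integralPowerBasis hdim hgen hη a₀ a₁ a₂ a₃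
  -- N w is odd
  obtain ⟨u, v, huv⟩ := hodd
  obtain ⟨v₀, v₁, v₂, v₃, hv⟩ := aux_repr η hζ.integralPowerBasis hdim hgen v
  have hmul : u * w = 1 - v * 2 := by linear_combination huv
  have h1v : (1 : 𝓞 (CyclotomicField 8 ℚ)) - v * 2 =
      ((1 - 2 * v₀ : ℤ) : 𝓞 (CyclotomicField 8 ℚ)) + (-(2 * v₁) : ℤ) * η
        + (-(2 * v₂) : ℤ) * η ^ 2 + (-(2 * v₃) : ℤ) * η ^ 3 := by
    rw [hv]; push_cast; ring
  have hNorm1v : Algebra.norm ℤ ((1 : 𝓞 (CyclotomicField 8 ℚ)) - v * 2) =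
      (1 - 2 * v₀) ^ 4 + (-(2 * v₁)) ^ 4 + (-(2 * v₂)) ^ 4 + (-(2 * v₃)) ^ 4
        + 2 * (1 - 2 * v₀) ^ 2 * (-(2 * v₂)) ^ 2 + 2 * (-(2 * v₁)) ^ 2 * (-(2 * v₃)) ^ 2
        + 4 * (1 - 2 * v₀) ^ 2 * (-(2 * v₁)) * (-(2 * v₃))
        - 4 * (1 - 2 * v₀) * (-(2 * v₁)) ^ 2 * (-(2 * v₂))
        + 4 * (1 - 2 * v₀) * (-(2 * v₂)) * (-(2 * v₃)) ^ 2
        - 4 * (-(2 * v₁)) * (-(2 * v₂)) ^ 2 * (-(2 * v₃)) := by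
    rw [h1v]; exact aux_norm η hζ.integralPowerBasis hdim hgen hη _ _ _ _
  have hodd1v : ((Algebra.norm ℤ ((1 : 𝓞 (CyclotomicField 8 ℚ)) - v * 2) : ℤ) : ZMod 2) = 1 := by
    rw [hNorm1v]
    push_cast
    exact aux_odd ((v₀ : ZMod 2)) ((v₁ : ZMod 2)) ((v₂ : ZMod 2)) ((v₃ : ZMod 2))
  have hNwodd : ((Algebra.norm ℤ w : ℤ) : ZMod 2) = 1 := by
    have hmulN : Algebra.norm ℤ u * Algebra.norm ℤ w =
        Algebra.norm ℤ ((1 : 𝓞 (CyclotomicField 8 ℚ)) - v * 2) := by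
      rw [← map_mul, hmul]
    have hcast : ((Algebra.norm ℤ u : ℤ) : ZMod 2) * ((Algebra.norm ℤ w : ℤ) : ZMod 2) = 1 := by
      rw [← Int.cast_mul, hmulN, hodd1v]
    generalize ((Algebra.norm ℤ u : ℤ) : ZMod 2) = x at hcast
    generalize ((Algebra.norm ℤ w : ℤ) : ZMod 2) = y at hcast ⊢
    revert hcast; revert x; revert y; decide
  -- conclude mod 8
  have : ((Algebra.norm ℤ w : ℤ) : ZMod 8) = 1 := by
    rw [hNw]
    push_cast
    apply aux_decide
    rw [show ((a₀ : ZMod 8) ^ 4 + (a₁ : ZMod 8) ^ 4 + (a₂ : ZMod 8) ^ 4 + (a₃ : ZMod 8) ^ 4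
        + 2 * (a₀ : ZMod 8) ^ 2 * (a₂ : ZMod 8) ^ 2 + 2 * (a₁ : ZMod 8) ^ 2 * (a₃ : ZMod 8) ^ 2
        + 4 * (a₀ : ZMod 8) ^ 2 * (a₁ : ZMod 8) * (a₃ : ZMod 8)
        - 4 * (a₀ : ZMod 8) * (a₁ : ZMod 8) ^ 2 * (a₂ : ZMod 8)
        + 4 * (a₀ : ZMod 8) * (a₂ : ZMod 8) * (a₃ : ZMod 8) ^ 2
        - 4 * (a₁ : ZMod 8) * (a₂ : ZMod 8) ^ 2 * (a₃ : ZMod 8))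
      = ((a₀ ^ 4 + a₁ ^ 4 + a₂ ^ 4 + a₃ ^ 4 + 2 * a₀ ^ 2 * a₂ ^ 2 + 2 * a₁ ^ 2 * a₃ ^ 2
        + 4 * a₀ ^ 2 * a₁ * a₃ - 4 * a₀ * a₁ ^ 2 * a₂ + 4 * a₀ * a₂ * a₃ ^ 2
        - 4 * a₁ * a₂ ^ 2 * a₃ : ℤ) : ZMod 8) from by push_cast; ring]
    rw [map_intCast]
    rw [← hNw]
    exact hNwodd
  have hfin := (ZMod.intCast_eq_intCast_iff (Algebra.norm ℤ w) 1 8).mp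
    (by rw [Int.cast_one]; exact this)
  exact_mod_cast hfin
end

section
/- The unit group of ℤ[ζ₈] is generated by ζ₈ and ε = 1 + √2 (where √2 = ζ₈ + ζ₈⁻¹); that is, every unit of ℤ[ζ₈] is of the form ζ₈^j · ε^k with 0 ≤ j ≤ 7 and k ∈ ℤ. -/
open NumberField

namespace Stmt18

open Polynomial Module

set_option maxHeartbeats 1000000
set_option synthInstance.maxHeartbeats 200000

local notation "K" => CyclotomicField 8 ℚ
local notation "O" => 𝓞 (CyclotomicField 8 ℚ)

instance : IsCyclotomicExtension {8} ℚ K := CyclotomicField.isCyclotomicExtension 8 ℚ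

instance : IsCyclotomicExtension {((8:ℕ+):ℕ)} ℚ K := CyclotomicField.isCyclotomicExtension 8 ℚ

lemma coe_inj : Function.Injective (algebraMap O K) :=
  NumberField.RingOfIntegers.coe_injective

lemma hirr : Irreducible (cyclotomic (8 : ℕ+) ℚ) := by
  have := cyclotomic.irreducible_rat (n := 8) (by norm_num)
  norm_num at this ⊢
  exact this

variable {ζ : O} (hζ : IsPrimitiveRoot ζ 8)

lemma hzK (hζ : IsPrimitiveRoot ζ 8) : IsPrimitiveRoot (algebraMap O K ζ) ((8:ℕ+):ℕ) := by
  have : ((8:ℕ+):ℕ) = 8 := rfl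
  rw [this]
  exact hζ.map_of_injective coe_inj

/-- the automorphism of K sending ζ to ζ^m for m coprime to 8 -/
noncomputable def autPow (m : ℕ) (hm : Nat.Coprime m 8) : K ≃ₐ[ℚ] K :=
  ((hzK hζ).powerBasis ℚ).equivOfMinpoly
    (((hzK hζ).pow_of_coprime m hm).powerBasis ℚ)
    (by
      rw [IsPrimitiveRoot.powerBasis_gen, IsPrimitiveRoot.powerBasis_gen,
        ← (hzK hζ).minpoly_eq_cyclotomic_of_irreducible hirr,
        ← ((hzK hζ).pow_of_coprime m hm).minpoly_eq_cyclotomic_of_irreducible hirr])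

lemma autPow_apply (m : ℕ) (hm : Nat.Coprime m 8) :
    autPow hζ m hm (algebraMap O K ζ) = (algebraMap O K ζ) ^ m := by
  conv_lhs => rw [← IsPrimitiveRoot.powerBasis_gen ℚ (hzK hζ)]
  rw [autPow, PowerBasis.equivOfMinpoly_gen, IsPrimitiveRoot.powerBasis_gen]


lemma hz8 (hζ : IsPrimitiveRoot ζ 8) : ζ ^ 8 = 1 := hζ.pow_eq_one

lemma hz4 (hζ : IsPrimitiveRoot ζ 8) : ζ ^ 4 = -1 := by
  rcases mul_self_eq_one_iff.mp (show ζ^4 * ζ^4 = 1 by rw [← pow_add]; exact hz8 hζ) with h | h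
  · exact absurd h (hζ.pow_ne_one_of_pos_of_lt (by norm_num) (by norm_num))
  · exact h

lemma hS2 (hζ : IsPrimitiveRoot ζ 8) : (ζ + ζ^7)^2 = 2 := by
  linear_combination (ζ^6 + 2) * hz8 hζ + ζ^2 * hz4 hζ

noncomputable def conjO (hζ : IsPrimitiveRoot ζ 8) : O ≃ₐ[ℤ] O :=
  galRestrict ℤ ℚ K O (autPow hζ 7 (by norm_num))

noncomputable def tauO (hζ : IsPrimitiveRoot ζ 8) : O ≃ₐ[ℤ] O :=
  galRestrict ℤ ℚ K O (autPow hζ 3 (by norm_num))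

lemma conjO_zeta : conjO hζ ζ = ζ ^ 7 := by
  apply coe_inj
  rw [conjO, algebraMap_galRestrict_apply, autPow_apply, map_pow]

lemma tauO_zeta : tauO hζ ζ = ζ ^ 3 := by
  apply coe_inj
  rw [tauO, algebraMap_galRestrict_apply, autPow_apply, map_pow]

lemma conjO_S : conjO hζ (ζ + ζ^7) = ζ + ζ^7 := by
  rw [map_add, map_pow, conjO_zeta]
  linear_combination (ζ^41 + ζ^33 + ζ^25 + ζ^17 + ζ^9 + ζ) * hz8 hζ

lemma tauO_S : tauO hζ (ζ + ζ^7) = -(ζ + ζ^7) := by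
  rw [map_add, map_pow, tauO_zeta]
  linear_combination (ζ^5*(ζ^8+1)) * hz8 hζ + (ζ + ζ^3) * hz4 hζ

lemma autPow7_sq (hζ : IsPrimitiveRoot ζ 8) :
    autPow hζ 7 (by norm_num) * autPow hζ 7 (by norm_num) = 1 := by
  apply AlgEquiv.coe_algHom_injective
  apply ((hzK hζ).powerBasis ℚ).algHom_ext
  simp only [AlgEquiv.toAlgHom_eq_coe, AlgHom.coe_coe, AlgEquiv.coe_toAlgHom, AlgEquiv.mul_apply, AlgEquiv.one_apply]
  rw [IsPrimitiveRoot.powerBasis_gen, autPow_apply, map_pow, autPow_apply]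
  have h8 : (algebraMap O K ζ) ^ 8 = 1 := by
    rw [← map_pow, hz8 hζ, map_one]
  calc ((algebraMap O K ζ) ^ 7) ^ 7 = ((algebraMap O K ζ)^8)^6 * algebraMap O K ζ := by ring
  _ = algebraMap O K ζ := by rw [h8]; ring

lemma conjO_conjO (x : O) : conjO hζ (conjO hζ x) = x := by
  have hmul : conjO hζ * conjO hζ = 1 := by
    rw [conjO, ← (galRestrict ℤ ℚ K O).map_mul, autPow7_sq hζ, map_one]
  calc conjO hζ (conjO hζ x) = (conjO hζ * conjO hζ) x := (AlgEquiv.mul_apply _ _ _).symm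
  _ = x := by rw [hmul]; rfl

lemma h7 (hζ : IsPrimitiveRoot ζ 8) : ζ^7 = -(ζ^3) := by
  linear_combination ζ^3 * hz4 hζ

lemma h14 (hζ : IsPrimitiveRoot ζ 8) : ζ^14 = -(ζ^2) := by
  linear_combination (ζ^6)*hz8 hζ + ζ^2 * hz4 hζ

lemma h21 (hζ : IsPrimitiveRoot ζ 8) : ζ^21 = -ζ := by
  linear_combination (ζ^13 + ζ^5)*hz8 hζ + ζ * hz4 hζ

instance : IsCyclotomicExtension {(((2:ℕ+)^3 : ℕ+) : ℕ)} ℚ K := by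
  have h : ((2:ℕ+)^3) = (8:ℕ+) := by decide
  rw [h]; infer_instance

lemma conj_fixed_mem (hζ : IsPrimitiveRoot ζ 8) {x : O} (hx : conjO hζ x = x) :
    ∃ a b : ℤ, x = (a : O) + (b : O) * (ζ + ζ^7) := by
  have hζ8 : IsPrimitiveRoot (algebraMap O K ζ) (((2:ℕ+)^3 : ℕ+) : ℕ) := hzK hζ
  let pb := hζ8.integralPowerBasis
  have hdim : pb.dim = 4 := by
    rw [IsPrimitiveRoot.integralPowerBasis_dim]; decide
  have hgen : pb.gen = ζ := by
    apply coe_inj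
    rw [IsPrimitiveRoot.integralPowerBasis_gen]
    rfl
  let B : Basis (Fin 4) ℤ O := pb.basis.reindex (finCongr hdim)
  have hB : ∀ i : Fin 4, B i = ζ ^ (i : ℕ) := by
    intro i
    rw [Basis.reindex_apply, pb.coe_basis, hgen]
    congr 1
  have hv0 : ((0 : Fin 4) : ℕ) = 0 := rfl
  have hv1 : ((1 : Fin 4) : ℕ) = 1 := rfl
  have hv2 : ((2 : Fin 4) : ℕ) = 2 := rfl
  have hv3 : ((3 : Fin 4) : ℕ) = 3 := rfl
  set c : Fin 4 → ℤ := fun i => B.repr x i with hc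
  have hrepr : x = (c 0 : O) + (c 1 : O) * ζ + (c 2 : O) * ζ^2 + (c 3 : O) * ζ^3 := by
    have hs := B.sum_repr x
    rw [Fin.sum_univ_four, hB 0, hB 1, hB 2, hB 3, hv0, hv1, hv2, hv3] at hs
    simp only [zsmul_eq_mul] at hs
    rw [← hs]
    ring
  have hconj : (c 0 : O) + (c 1 : O) * ζ^7 + (c 2 : O) * ζ^14 + (c 3 : O) * ζ^21 = x := by
    conv_rhs => rw [← hx, hrepr]
    simp only [map_add, map_mul, map_pow, map_intCast, conjO_zeta]
    ring
  have hconj' : (c 0 : O) + (c 1 : O) * (-(ζ^3)) + (c 2 : O) * (-(ζ^2)) + (c 3 : O) * (-ζ) = x := by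
    rw [← h7 hζ, ← h14 hζ, ← h21 hζ]; exact hconj
  have hg0 : ∑ i, (![0, c 1 + c 3, 2 * c 2, c 1 + c 3] : Fin 4 → ℤ) i • B i = 0 := by
    rw [Fin.sum_univ_four, hB 0, hB 1, hB 2, hB 3, hv0, hv1, hv2, hv3]
    simp only [zsmul_eq_mul, Matrix.cons_val_zero, Matrix.cons_val_one, Matrix.head_cons,
      Matrix.cons_val_two, Matrix.tail_cons, Matrix.cons_val_three]
    push_cast
    linear_combination -hrepr - hconj'
  have hLI := Fintype.linearIndependent_iff.mp B.linearIndependent _ hg0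
  have hc2 : c 2 = 0 := by have := hLI 2; simp at this; omega
  have hc3 : c 3 = -(c 1) := by have := hLI 1; simp at this; omega
  refine ⟨c 0, c 1, ?_⟩
  have hc2' : (c 2 : O) = 0 := by exact_mod_cast congrArg (Int.cast : ℤ → O) hc2
  have hc3' : (c 3 : O) = -(c 1 : O) := by exact_mod_cast congrArg (Int.cast : ℤ → O) hc3
  linear_combination hrepr + hc2' * ζ^2 + hc3' * ζ^3 - (c 1 : O) * h7 hζ

lemma norm_pm_one (hζ : IsPrimitiveRoot ζ 8) {a b : ℤ}
    (h : IsUnit ((a : O) + (b : O) * (ζ + ζ^7))) :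
    a^2 - 2*b^2 = 1 ∨ a^2 - 2*b^2 = -1 := by
  have h2 : IsUnit (tauO hζ ((a:O) + (b:O)*(ζ+ζ^7))) := h.map (tauO hζ)
  have hτ : tauO hζ ((a:O) + (b:O)*(ζ+ζ^7)) = (a:O) - (b:O)*(ζ+ζ^7) := by
    rw [map_add, map_mul, map_intCast, map_intCast, tauO_S hζ]
    ring
  rw [hτ] at h2
  have hprod : ((a:O) + (b:O)*(ζ+ζ^7)) * ((a:O) - (b:O)*(ζ+ζ^7))
      = ((a^2 - 2*b^2 : ℤ) : O) := by
    push_cast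
    linear_combination (-(b:O)^2) * hS2 hζ
  have hu : IsUnit ((a^2 - 2*b^2 : ℤ) : O) := by
    rw [← hprod]; exact h.mul h2
  have hn : IsUnit ((Algebra.norm ℤ) (((a^2-2*b^2 : ℤ) : O))) := hu.map (Algebra.norm ℤ)
  rw [show ((a^2-2*b^2 : ℤ) : O) = algebraMap ℤ O (a^2-2*b^2) from rfl,
    Algebra.norm_algebraMap_of_basis (NumberField.RingOfIntegers.basis K)] at hn
  have hcard : Fintype.card (Free.ChooseBasisIndex ℤ O) ≠ 0 := Fintype.card_ne_zero
  exact Int.isUnit_iff.mp ((isUnit_pow_iff hcard).mp hn)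

lemma descent (hζ : IsPrimitiveRoot ζ 8) (eu : Oˣ) (heu : (eu : O) = 1 + (ζ + ζ^7)) :
    ∀ N : ℕ, ∀ b a : ℤ, b.natAbs ≤ N → (a^2 - 2*b^2 = 1 ∨ a^2 - 2*b^2 = -1) →
      ∀ w : Oˣ, (w : O) = (a:O) + (b:O)*(ζ+ζ^7) → ∃ k : ℤ, w = eu^k ∨ w = -eu^k := by
  have heuinv : ((eu⁻¹ : Oˣ) : O) = -1 + (ζ + ζ^7) := by
    have hmul : ((-1 : O) + (ζ+ζ^7)) * ((1:O) + (ζ+ζ^7)) = 1 := by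
      linear_combination hS2 hζ
    have hmul' : ((1:O) + (ζ+ζ^7)) * ((-1 : O) + (ζ+ζ^7)) = 1 := by
      linear_combination hS2 hζ
    have : eu⁻¹ = ⟨-1 + (ζ+ζ^7), 1 + (ζ+ζ^7), hmul, hmul'⟩ := by
      apply inv_eq_of_mul_eq_one_right
      apply Units.ext
      rw [Units.val_mul, heu]
      exact hmul'
    rw [this]
  intro N
  induction N with
  | zero =>
    intro b a hb hn w hw
    have hb0 : b = 0 := by omega
    subst hb0
    have ha : a = 1 ∨ a = -1 := by
      rcases hn with h | h
      · exact mul_self_eq_one_iff.mp (by nlinarith)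
      · exfalso; nlinarith [sq_nonneg a]
    refine ⟨0, ?_⟩
    rcases ha with h | h <;> subst h
    · left; apply Units.ext; rw [zpow_zero, Units.val_one, hw]; push_cast; ring
    · right; apply Units.ext
      rw [Units.val_neg, zpow_zero, Units.val_one, hw]; push_cast; ring
  | succ N ih =>
    intro b a hb hn w hw
    by_cases hb0 : b = 0
    · exact ih b a (by simp [hb0]) hn w hw
    have hb2 : 1 ≤ b^2 := by
      rcases lt_or_gt_of_ne hb0 with h' | h' <;> nlinarith
    have ha0 : a ≠ 0 := by
      rintro rfl
      rcases hn with h | h <;> nlinarith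
    set t : ℤ := if 0 < a * b then 1 else -1 with ht
    have htor : t = 1 ∨ t = -1 := by rw [ht]; split <;> simp
    have htab : 0 < (t * a) * b := by
      rcases lt_trichotomy (a*b) 0 with h | h | h
      · rw [ht, if_neg (by omega)]; nlinarith
      · exfalso; rcases mul_eq_zero.mp h with h' | h' <;> [exact ha0 h'; exact hb0 h']
      · rw [ht, if_pos h]; nlinarith
    have ht2 : t * t = 1 := by rcases htor with h | h <;> rw [h] <;> norm_num
    have hT2 : (t*a)^2 = a^2 := by linear_combination (a^2) * ht2
    -- key inequality
    have key : 2*((t*a)*b) > a^2 := by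
      rcases lt_trichotomy b 0 with hbneg | hbz | hbpos
      · have hTneg : t*a < 0 := by nlinarith
        rcases hn with h | h
        · have h1 : t*a ≤ b - 1 := by nlinarith [sq_nonneg (t*a - b), sq_nonneg (t*a + b)]
          nlinarith
        · have h1 : t*a ≤ b := by nlinarith [sq_nonneg (t*a - b), sq_nonneg (t*a + b)]
          nlinarith
      · exact absurd hbz hb0
      · have hTpos : 0 < t*a := by nlinarith
        rcases hn with h | h
        · have h1 : t*a ≥ b + 1 := by nlinarith [sq_nonneg (t*a - b), sq_nonneg (t*a + b)]
          nlinarith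
        · have h1 : t*a ≥ b := by nlinarith [sq_nonneg (t*a - b), sq_nonneg (t*a + b)]
          nlinarith
    have hlt : (a - t*b)^2 < b^2 := by nlinarith [key, ht2]
    have hbN : (a - t*b).natAbs ≤ N := by
      have h1 : (a - t*b).natAbs < b.natAbs := by
        by_contra h'
        push_neg at h'
        have h2 : |b| ≤ |a - t*b| := by
          rw [Int.abs_eq_natAbs, Int.abs_eq_natAbs]
          exact_mod_cast h'
        nlinarith [sq_abs b, sq_abs (a - t*b), abs_nonneg b,
          pow_le_pow_left₀ (abs_nonneg b) h2 2]
      omega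
    have hnorm' : (2*b - t*a)^2 - 2*(a - t*b)^2 = 1 ∨ (2*b - t*a)^2 - 2*(a - t*b)^2 = -1 := by
      rcases hn with h | h
      · right; linear_combination (a^2 - 2*b^2)*ht2 - h
      · left; linear_combination (a^2 - 2*b^2)*ht2 - h
    -- the new unit
    have hcoeInv : ((eu^(-t) : Oˣ) : O) = -(t:O) + (ζ+ζ^7) := by
      rcases htor with h | h <;> rw [h]
      · rw [zpow_neg, zpow_one, heuinv]; push_cast; ring
      · rw [neg_neg, zpow_one, heu]; push_cast; ring
    set w' : Oˣ := w * eu^(-t) with hw'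
    have hw'coe : (w' : O) = ((2*b - t*a : ℤ):O) + ((a - t*b : ℤ):O)*(ζ+ζ^7) := by
      rw [hw', Units.val_mul, hw, hcoeInv]
      push_cast
      linear_combination ((b:O)) * hS2 hζ
    obtain ⟨k, hk⟩ := ih (a - t*b) (2*b - t*a) hbN hnorm' w' hw'coe
    refine ⟨k + t, ?_⟩
    have hww : w = w' * eu^t := by
      rw [hw', mul_assoc, ← zpow_add, neg_add_cancel, zpow_zero, mul_one]
    rcases hk with h | h
    · left; rw [hww, h, ← zpow_add]
    · right; rw [hww, h, neg_mul, ← zpow_add]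

lemma m_eq_eight (m : ℕ) (h8 : 8 ∣ m) (hd : Nat.totient m ∣ 4) : m = 8 := by
  have hm0 : m ≠ 0 := by
    rintro rfl
    simp [Nat.totient_zero] at hd
  obtain ⟨k, hk⟩ := h8
  by_contra hne
  have hk1 : k ≠ 1 := by rintro rfl; omega
  have hk0 : k ≠ 0 := by rintro rfl; omega
  obtain ⟨p, pp, hpk⟩ := Nat.exists_prime_and_dvd hk1
  rcases eq_or_ne p 2 with rfl | hodd
  · have h16 : 16 ∣ m := by
      obtain ⟨k', rfl⟩ := hpk
      rw [hk]; ring_nf; omega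
    have := Nat.totient_dvd_of_dvd h16
    rw [show Nat.totient 16 = 8 by decide] at this
    have : (8:ℕ) ∣ 4 := this.trans hd
    omega
  · have hcop : Nat.Coprime 8 p := by
      have h2 : Nat.Coprime 2 p := (Nat.coprime_primes Nat.prime_two pp).mpr (Ne.symm hodd)
      simpa using h2.pow_left 3
    have hpm : p ∣ m := hk ▸ hpk.mul_left 8
    have h8p : 8*p ∣ m := hcop.mul_dvd_of_dvd_of_dvd ⟨k, hk⟩ hpm
    have htot := Nat.totient_dvd_of_dvd h8p
    rw [Nat.totient_mul hcop, Nat.totient_prime pp, show Nat.totient 8 = 4 by decide] at htot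
    have hd4 : 4*(p-1) ∣ 4 := htot.trans hd
    have hle := Nat.le_of_dvd (by norm_num) hd4
    have := pp.two_le
    omega

lemma hfr : Module.finrank ℚ K = 4 := by
  rw [IsCyclotomicExtension.finrank (n := 8) (CyclotomicField 8 ℚ) hirr]
  decide

lemma conj_embed (hζ : IsPrimitiveRoot ζ 8) (φ : K →+* ℂ) (x : K) :
    φ (autPow hζ 7 (by norm_num) x) = (starRingEnd ℂ) (φ x) := by
  have key : (φ.comp ((autPow hζ 7 (by norm_num) : K ≃ₐ[ℚ] K) : K →ₐ[ℚ] K).toRingHom).toRatAlgHom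
      = ((starRingEnd ℂ).comp φ).toRatAlgHom := by
    apply ((hzK hζ).powerBasis ℚ).algHom_ext
    rw [IsPrimitiveRoot.powerBasis_gen]
    show φ (autPow hζ 7 (by norm_num) (algebraMap O K ζ))
        = (starRingEnd ℂ) (φ (algebraMap O K ζ))
    rw [autPow_apply, map_pow]
    set z := φ (algebraMap O K ζ) with hzdef
    have hz8' : z ^ 8 = 1 := by
      rw [hzdef, ← map_pow, ← map_pow, hz8 hζ, map_one, map_one]
    have habs : ‖z‖ = 1 := by
      have h8 : ‖z‖ ^ 8 = 1 := by rw [← norm_pow, hz8', norm_one]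
      rcases lt_trichotomy (‖z‖) 1 with h | h | h
      · exfalso
        have := pow_lt_one₀ (norm_nonneg z) h (by norm_num : (8:ℕ) ≠ 0)
        rw [h8] at this; exact lt_irrefl 1 this
      · exact h
      · exfalso
        have := one_lt_pow₀ h (by norm_num : (8:ℕ) ≠ 0)
        rw [h8] at this; exact lt_irrefl 1 this
    have hzinv : z⁻¹ = (starRingEnd ℂ) z := Complex.inv_eq_conj habs
    rw [← hzinv]
    symm
    apply inv_eq_of_mul_eq_one_right
    rw [← pow_succ']
    exact hz8'
  have := DFunLike.congr_fun key x
  simpa using this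

lemma tau_embed (hζ : IsPrimitiveRoot ζ 8) (φ : K →+* ℂ) :
    φ (autPow hζ 3 (by norm_num) (algebraMap O K (ζ + ζ^7)))
      = -(φ (algebraMap O K (ζ + ζ^7))) := by
  rw [show autPow hζ 3 (by norm_num) (algebraMap O K (ζ + ζ^7))
      = algebraMap O K (tauO hζ (ζ + ζ^7)) from
    (algebraMap_galRestrict_apply ℤ _ _).symm, tauO_S hζ, map_neg, map_neg]

lemma conj_embed_S (hζ : IsPrimitiveRoot ζ 8) (φ : K →+* ℂ) :
    (φ (algebraMap O K (ζ + ζ^7))).im = 0 := by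
  have h1 : autPow hζ 7 (by norm_num) (algebraMap O K (ζ + ζ^7))
      = algebraMap O K (ζ + ζ^7) := by
    rw [show autPow hζ 7 (by norm_num) (algebraMap O K (ζ + ζ^7))
        = algebraMap O K (conjO hζ (ζ + ζ^7)) from
      (algebraMap_galRestrict_apply ℤ _ _).symm, conjO_S hζ]
  have h2 := conj_embed hζ φ (algebraMap O K (ζ + ζ^7))
  rw [h1] at h2
  exact Complex.conj_eq_iff_im.mp h2.symm

lemma normSq_embed (hζ : IsPrimitiveRoot ζ 8) (φ : K →+* ℂ) (x y : O)
    (h : x * conjO hζ x = y) :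
    ((Complex.normSq (φ (algebraMap O K x)) : ℝ) : ℂ) = φ (algebraMap O K y) := by
  rw [← h, map_mul, map_mul]
  rw [show algebraMap O K (conjO hζ x) = autPow hζ 7 (by norm_num) (algebraMap O K x) from
    by rw [conjO]; exact algebraMap_galRestrict_apply ℤ _ _, conj_embed hζ]
  exact (Complex.mul_conj _).symm

lemma conj_cases (hζ : IsPrimitiveRoot ζ 8) (x : O) :
    ¬ (x * conjO hζ x = -1 ∨ x * conjO hζ x = 1 + (ζ+ζ^7)
        ∨ x * conjO hζ x = -(1 + (ζ+ζ^7))) := by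
  intro hcase
  have hne : Nonempty (K →+* ℂ) := by
    have hcard := NumberField.Embeddings.card (CyclotomicField 8 ℚ) ℂ
    rw [hfr] at hcard
    exact Fintype.card_pos_iff.mp (by omega)
  obtain ⟨φ⟩ := hne
  set φ' : K →+* ℂ :=
    φ.comp ((autPow hζ 3 (by norm_num) : K ≃ₐ[ℚ] K) : K →ₐ[ℚ] K).toRingHom with hφ'
  set s : ℝ := (φ (algebraMap O K (ζ + ζ^7))).re with hs
  have hre : φ (algebraMap O K (ζ + ζ^7)) = (s : ℂ) := by
    apply Complex.ext
    · simp [hs]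
    · simp only [Complex.ofReal_im]
      exact conj_embed_S hζ φ
  have hs2 : s^2 = 2 := by
    have h2 : (φ (algebraMap O K (ζ + ζ^7)))^2 = 2 := by
      rw [← map_pow, ← map_pow, hS2 hζ]
      push_cast
      rw [map_ofNat, map_ofNat]
    rw [hre] at h2
    exact_mod_cast h2
  have hre' : φ' (algebraMap O K (ζ + ζ^7)) = -(s : ℂ) := by
    rw [hφ']
    show φ (autPow hζ 3 (by norm_num) (algebraMap O K (ζ + ζ^7))) = -(s:ℂ)
    rw [tau_embed hζ φ, hre]
  rcases hcase with h | h | h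
  · have h1 := normSq_embed hζ φ x (-1) h
    rw [map_neg, map_neg, map_one, map_one] at h1
    have : Complex.normSq (φ (algebraMap O K x)) = -1 := by exact_mod_cast h1
    nlinarith [Complex.normSq_nonneg (φ (algebraMap O K x))]
  · have h1 := normSq_embed hζ φ x _ h
    have h2 := normSq_embed hζ φ' x _ h
    rw [map_add, map_add, map_one, map_one, hre] at h1
    rw [map_add, map_add, map_one, map_one, hre'] at h2
    have e1 : Complex.normSq (φ (algebraMap O K x)) = 1 + s := by
      apply Complex.ofReal_inj.mp; rw [h1]; push_cast; ring
    have e2 : Complex.normSq (φ' (algebraMap O K x)) = 1 - s := by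
      apply Complex.ofReal_inj.mp; rw [h2]; push_cast; ring
    nlinarith [Complex.normSq_nonneg (φ (algebraMap O K x)),
      Complex.normSq_nonneg (φ' (algebraMap O K x))]
  · have h1 := normSq_embed hζ φ x _ h
    have h2 := normSq_embed hζ φ' x _ h
    rw [map_neg, map_neg, map_add, map_add, map_one, map_one, hre] at h1
    rw [map_neg, map_neg, map_add, map_add, map_one, map_one, hre'] at h2
    have e1 : Complex.normSq (φ (algebraMap O K x)) = -(1 + s) := by
      apply Complex.ofReal_inj.mp; rw [h1]; push_cast; ring
    have e2 : Complex.normSq (φ' (algebraMap O K x)) = -(1 - s) := by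
      apply Complex.ofReal_inj.mp; rw [h2]; push_cast; ring
    nlinarith [Complex.normSq_nonneg (φ (algebraMap O K x)),
      Complex.normSq_nonneg (φ' (algebraMap O K x))]

lemma is_root_of_unity (hζ : IsPrimitiveRoot ζ 8) (v : Oˣ)
    (hv : (v : O) * conjO hζ (v : O) = 1) : ∃ j < 8, ζ^j = (v : O) := by
  -- all archimedean absolute values are 1
  have hnorm : ∀ ψ : K →+* ℂ, ‖ψ (algebraMap O K (v:O))‖ = 1 := by
    intro ψ
    have h1 := normSq_embed hζ ψ (v:O) 1 hv
    rw [map_one, map_one] at h1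
    have hq : Complex.normSq (ψ (algebraMap O K (v:O))) = 1 := by exact_mod_cast h1
    have habs := Complex.sq_norm (ψ (algebraMap O K (v:O)))
    rw [hq] at habs
    nlinarith [norm_nonneg (ψ (algebraMap O K (v:O)))]
  obtain ⟨n, hn, hvn⟩ := NumberField.Embeddings.pow_eq_one_of_norm_eq_one K ℂ
    (NumberField.RingOfIntegers.isIntegral_coe (v:O)) hnorm
  have hvO : ((v:O))^n = 1 := coe_inj (by rw [map_pow, map_one]; exact hvn)
  have hvu : v^n = 1 := Units.ext (by rw [Units.val_pow_eq_pow_val, hvO, Units.val_one])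
  -- the unit ζ
  have hz71 : ζ * ζ^7 = 1 := by rw [← pow_succ']; exact hz8 hζ
  have hz71' : ζ^7 * ζ = 1 := by rw [← pow_succ]; exact hz8 hζ
  set zu : Oˣ := ⟨ζ, ζ^7, hz71, hz71'⟩ with hzu
  have hordz : orderOf zu = 8 := by
    rw [← orderOf_units]
    show orderOf ζ = 8
    exact hζ.eq_orderOf.symm
  have hfin : IsOfFinOrder v := isOfFinOrder_iff_pow_eq_one.mpr ⟨n, hn, hvu⟩
  obtain ⟨z, -, hzord⟩ := (Commute.all v zu).exists_orderOf_eq_lcm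
  set m := Nat.lcm (orderOf v) (orderOf zu) with hm
  have hm0 : m ≠ 0 := Nat.lcm_ne_zero hfin.orderOf_pos.ne' (by rw [hordz]; norm_num)
  have h8m : (8:ℕ) ∣ m := by rw [hm]; exact dvd_trans (dvd_of_eq hordz.symm) (Nat.dvd_lcm_right _ _)
  -- primitive root of order m in K
  have h1 : IsPrimitiveRoot z (orderOf z) := IsPrimitiveRoot.orderOf z
  rw [hzord] at h1
  have h2 : IsPrimitiveRoot ((z : O)) m := h1.map_of_injective (f := Units.coeHom O) (fun _ _ h => Units.ext h)
  have h3 : IsPrimitiveRoot (algebraMap O K ((z:O))) m := h2.map_of_injective coe_inj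
  have hmp := Polynomial.cyclotomic_eq_minpoly_rat h3 (Nat.pos_of_ne_zero hm0)
  have hdvd := minpoly.degree_dvd (IsIntegral.of_finite ℚ (algebraMap O K ((z:O))))
  rw [← hmp, Polynomial.natDegree_cyclotomic, hfr] at hdvd
  have hm8 : m = 8 := m_eq_eight m h8m hdvd
  have hdv : orderOf v ∣ 8 := dvd_trans (Nat.dvd_lcm_left (orderOf v) (orderOf zu)) (dvd_of_eq hm8)
  have hv8 : v^8 = 1 := orderOf_dvd_iff_pow_eq_one.mp hdv
  have hv8' : ((v:O))^8 = 1 := by rw [← Units.val_pow_eq_pow_val, hv8, Units.val_one]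
  exact hζ.eq_pow_of_pow_eq_one hv8'

end Stmt18

open Stmt18 in
/-- The unit group of `ℤ[ζ₈]` is generated by `ζ₈` and `ε = 1 + √2`, where
`√2 = ζ₈ + ζ₈⁻¹ = ζ₈ + ζ₈⁷`: every unit is `ζ₈^j · ε^k` with `0 ≤ j ≤ 7`, `k ∈ ℤ`. -/
theorem stmt_18 (ζ : 𝓞 (CyclotomicField 8 ℚ)) (hζ : IsPrimitiveRoot ζ 8)
    (zu eu : (𝓞 (CyclotomicField 8 ℚ))ˣ)
    (hzu : (zu : 𝓞 (CyclotomicField 8 ℚ)) = ζ)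
    (heu : (eu : 𝓞 (CyclotomicField 8 ℚ)) = 1 + ζ + ζ ^ 7) :
    ∀ u : (𝓞 (CyclotomicField 8 ℚ))ˣ, ∃ (j : ℕ) (k : ℤ), j ≤ 7 ∧ u = zu ^ j * eu ^ k := by
  intro u
  have heu' : (eu : 𝓞 (CyclotomicField 8 ℚ)) = 1 + (ζ + ζ^7) := by rw [heu]; ring
  set cu : (𝓞 (CyclotomicField 8 ℚ))ˣ →* (𝓞 (CyclotomicField 8 ℚ))ˣ :=
    Units.map (conjO hζ).toAlgHom.toRingHom.toMonoidHom with hcudef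
  have hcu : ∀ x : (𝓞 (CyclotomicField 8 ℚ))ˣ,
      ((cu x : (𝓞 (CyclotomicField 8 ℚ))ˣ) : 𝓞 (CyclotomicField 8 ℚ)) = conjO hζ (x : 𝓞 (CyclotomicField 8 ℚ)) := by
    intro x; rfl
  have hconj_eu : cu eu = eu := by
    apply Units.ext
    rw [hcu, heu']
    rw [map_add, map_one, conjO_S hζ]
  set w : (𝓞 (CyclotomicField 8 ℚ))ˣ := u * cu u with hwdef
  have hwfix : conjO hζ (w : 𝓞 (CyclotomicField 8 ℚ)) = (w : 𝓞 (CyclotomicField 8 ℚ)) := by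
    rw [hwdef, Units.val_mul, hcu, map_mul, conjO_conjO hζ]
    exact mul_comm _ _
  obtain ⟨a, b, hab⟩ := conj_fixed_mem hζ hwfix
  have hn := norm_pm_one hζ (hab ▸ w.isUnit)
  obtain ⟨k, hk⟩ := descent hζ eu heu' b.natAbs b a le_rfl hn w hab
  rcases Int.even_or_odd k with ⟨k', hkk⟩ | ⟨k', hkk⟩
  · -- even case
    set v : (𝓞 (CyclotomicField 8 ℚ))ˣ := u * eu^(-k') with hvdef
    have hvu : v * cu v = w * eu^(-k' + -k') := by
      calc v * cu v = (u * eu^(-k')) * (cu u * (cu eu)^(-k')) := by rw [map_mul, map_zpow]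
      _ = (u * cu u) * (eu^(-k') * eu^(-k')) := by rw [hconj_eu]; exact mul_mul_mul_comm _ _ _ _
      _ = w * eu^(-k' + -k') := by rw [zpow_add]
    rcases hk with hwk | hwk
    · -- w = eu^k : the good case
      have hv1 : v * cu v = 1 := by
        rw [hvu, hwk, ← zpow_add, hkk,
          show k' + k' + (-k' + -k') = 0 by ring, zpow_zero]
      have hv1' : (v : 𝓞 (CyclotomicField 8 ℚ)) * conjO hζ (v : 𝓞 (CyclotomicField 8 ℚ)) = 1 := by
        rw [← hcu, ← Units.val_mul, hv1, Units.val_one]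
      obtain ⟨j, hj8, hjv⟩ := is_root_of_unity hζ v hv1'
      refine ⟨j, k', by omega, ?_⟩
      have hvz : v = zu ^ j := by
        apply Units.ext
        rw [Units.val_pow_eq_pow_val, hzu, hjv]
      have : u = v * eu^(k') := by
        rw [hvdef, mul_assoc, ← zpow_add, neg_add_cancel, zpow_zero, mul_one]
      rw [this, hvz]
    · -- w = -eu^k : contradiction
      exfalso
      have hv1 : v * cu v = -1 := by
        rw [hvu, hwk, neg_mul, ← zpow_add, hkk,
          show k' + k' + (-k' + -k') = 0 by ring, zpow_zero]
      apply conj_cases hζ ((v : 𝓞 (CyclotomicField 8 ℚ)))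
      left
      rw [← hcu, ← Units.val_mul, hv1, Units.val_neg, Units.val_one]
  · -- odd case : contradiction
    exfalso
    set v : (𝓞 (CyclotomicField 8 ℚ))ˣ := u * eu^(-k') with hvdef
    have hvu : v * cu v = w * eu^(-k' + -k') := by
      calc v * cu v = (u * eu^(-k')) * (cu u * (cu eu)^(-k')) := by rw [map_mul, map_zpow]
      _ = (u * cu u) * (eu^(-k') * eu^(-k')) := by rw [hconj_eu]; exact mul_mul_mul_comm _ _ _ _
      _ = w * eu^(-k' + -k') := by rw [zpow_add]
    apply conj_cases hζ ((v : 𝓞 (CyclotomicField 8 ℚ)))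
    rcases hk with hwk | hwk
    · right; left
      have hv1 : v * cu v = eu := by
        rw [hvu, hwk, ← zpow_add, hkk, show 2*k' + 1 + (-k' + -k') = 1 by ring, zpow_one]
      rw [← hcu, ← Units.val_mul, hv1, heu']
    · right; right
      have hv1 : v * cu v = -eu := by
        rw [hvu, hwk, neg_mul, ← zpow_add, hkk, show 2*k' + 1 + (-k' + -k') = 1 by ring, zpow_one]
      rw [← hcu, ← Units.val_mul, hv1, Units.val_neg, heu']
end
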